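/- arXiv:math/0311335 — 3 statements merged into one kernel-verified Lean document; each statement's English description precedes it below -/
import Mathlib

section
/- Let k ≥ 0 be an integer and set σ = k + 3 and C = 2(k+2)². Then for all real λ with |λ| ≤ T, all real β ≠ 0 with |β| ≤ k/2 + 1, and all real γ with |γ| > T + 1, one has |β|/(β² + (γ-λ)²) ≤ C·[(σ-β)/((σ-β)² + (γ-T)²) + (σ-β)/((σ-β)² + (γ+T)²)]. -/
/-- Core estimate: if `1 ≤ s`, `1 < x ≤ y` and `2|β|s ≤ C`, then
`|β|/(β²+y) ≤ C·s/(s²+x)`. -/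
lemma stmt2_key (β s x y C : ℝ) (hs1 : 1 ≤ s) (hx : 1 < x) (hyx : x ≤ y)
    (hC : 2 * |β| * s ≤ C) :
    |β| / (β ^ 2 + y) ≤ C * (s / (s ^ 2 + x)) := by
  have hx0 : (0:ℝ) < x := lt_trans one_pos hx
  have hy0 : (0:ℝ) < y := lt_of_lt_of_le hx0 hyx
  have hden : (0:ℝ) < β ^ 2 + y := by positivity
  have hden2 : (0:ℝ) < s ^ 2 + x := by positivity
  have h1 : |β| / (β ^ 2 + y) ≤ |β| / x := by
    apply div_le_div_of_nonneg_left (abs_nonneg β) hx0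
    nlinarith [sq_nonneg β]
  refine h1.trans ?_
  rw [mul_div_assoc'] at *
  rw [div_le_div_iff₀ hx0 hden2]
  have hs0 : (0:ℝ) ≤ s := le_trans zero_le_one hs1
  have e1 : 0 ≤ |β| * s ^ 2 * (x - 1) :=
    mul_nonneg (mul_nonneg (abs_nonneg β) (sq_nonneg s)) (by linarith)
  have e2 : 0 ≤ |β| * x * (s ^ 2 - 1) :=
    mul_nonneg (mul_nonneg (abs_nonneg β) hx0.le) (by nlinarith)
  have e3 : 0 ≤ (C - 2 * |β| * s) * (s * x) :=
    mul_nonneg (by linarith) (mul_nonneg hs0 hx0.le)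
  nlinarith [e1, e2, e3]

/-- With σ = k + 3 and C = 2(k+2)², for |λ| ≤ T, 0 < |β| ≤ k/2 + 1 and
|γ| > T + 1, one has
`|β|/(β² + (γ-λ)²) ≤ C·[(σ-β)/((σ-β)² + (γ-T)²) + (σ-β)/((σ-β)² + (γ+T)²)]`. -/
theorem stmt2 (k : ℕ) (T l β γ : ℝ) (hT : 0 < T)
    (hl : |l| ≤ T) (hβ0 : β ≠ 0) (hβ : |β| ≤ (k : ℝ) / 2 + 1) (hγ : T + 1 < |γ|) :
    |β| / (β ^ 2 + (γ - l) ^ 2) ≤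
      (2 * ((k : ℝ) + 2) ^ 2) *
        ((((k : ℝ) + 3) - β) / ((((k : ℝ) + 3) - β) ^ 2 + (γ - T) ^ 2) +
         (((k : ℝ) + 3) - β) / ((((k : ℝ) + 3) - β) ^ 2 + (γ + T) ^ 2)) := by
  have hk0 : (0:ℝ) ≤ (k:ℝ) := Nat.cast_nonneg k
  obtain ⟨hβ1, hβ2⟩ := abs_le.mp hβ
  obtain ⟨hl1, hl2⟩ := abs_le.mp hl
  set s : ℝ := ((k : ℝ) + 3) - β with hsdef
  have hs1 : (1:ℝ) ≤ s := by simp only [hsdef]; linarith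
  have hsle : s ≤ 2 * ((k:ℝ) + 2) := by simp only [hsdef]; linarith
  have hs0 : (0:ℝ) < s := by linarith
  have hC : 2 * |β| * s ≤ 2 * ((k:ℝ) + 2) ^ 2 := by
    nlinarith [abs_nonneg β, hβ]
  have hC0 : (0:ℝ) ≤ 2 * ((k:ℝ) + 2) ^ 2 := by positivity
  rw [mul_add]
  rcases lt_abs.mp hγ with h | h
  · -- γ > T + 1 : use the (γ - T) term
    have hx : (1:ℝ) < (γ - T) ^ 2 := by nlinarith
    have hyx : (γ - T) ^ 2 ≤ (γ - l) ^ 2 := by nlinarith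
    have hmain := stmt2_key β s ((γ - T)^2) ((γ - l)^2) (2 * ((k:ℝ) + 2) ^ 2)
      hs1 hx hyx hC
    have hpos : (0:ℝ) ≤ (2 * ((k:ℝ) + 2) ^ 2) * (s / (s ^ 2 + (γ + T) ^ 2)) := by
      positivity
    linarith
  · -- γ < -(T + 1) : use the (γ + T) term
    have hx : (1:ℝ) < (γ + T) ^ 2 := by nlinarith
    have hyx : (γ + T) ^ 2 ≤ (γ - l) ^ 2 := by nlinarith
    have hmain := stmt2_key β s ((γ + T)^2) ((γ - l)^2) (2 * ((k:ℝ) + 2) ^ 2)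
      hs1 hx hyx hC
    have hpos : (0:ℝ) ≤ (2 * ((k:ℝ) + 2) ^ 2) * (s / (s ^ 2 + (γ - T) ^ 2)) := by
      positivity
    linarith
end

section
/- Let G be the real Lie group SL_n(ℝ) (n ≥ 2), K = SO(n) its maximal compact subgroup, with Cartan decomposition g = k ⊕ p at the Lie algebra level. If k₀ ∈ K and g ∈ G satisfy g⁻¹ k₀ g ∈ K, then there exists k' ∈ K with g⁻¹ k₀ g = k'⁻¹ k₀ k'. In other words, the intersection of the G-conjugacy class of k₀ with K equals the K-conjugacy class of k₀. -/
/-!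
Write `g = u p` with `u` orthogonal and `p = √(gᵀ g) ≥ 0` (polar decomposition). If `p m = k p`
for orthogonal `m` and `k`, then `k p² kᵀ = p m mᵀ p = p²`, so `k p kᵀ` is a nonnegative square
root of `p²`, hence equal to `p`; thus `k` commutes with `p` and `m = k`. Applied to
`m = g⁻¹ k₀ g` and `k = u⁻¹ k₀ u` this gives `g⁻¹ k₀ g = u⁻¹ k₀ u`, and `u ∈ SL_n(ℝ)` because
`det u · det p = 1` with `det p ≥ 0` and `det u = ±1`.
-/

section PolarDecomposition

variable {A : Type*} [PartialOrder A] [Ring A] [StarRing A] [TopologicalSpace A]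
  [StarOrderedRing A] [Algebra ℝ A] [ContinuousFunctionalCalculus ℝ A IsSelfAdjoint]
  [NonnegSpectrumClass ℝ A] [IsSemitopologicalRing A] [T2Space A]

theorem commute_of_conj_mul_self_eq {u p : A} (hu : u ∈ unitary A) (hp : 0 ≤ p)
    (h : u * (p * p) * star u = p * p) : Commute u p := by
  have hconj : u * p * star u = p := by
    rw [← CFC.mul_self_eq_mul_self_iff _ _ (star_right_conjugate_nonneg hp u) hp, ← h]
    calc u * p * star u * (u * p * star u) = u * p * (star u * u) * p * star u := by noncomm_ring
      _ = u * (p * p) * star u := by rw [Unitary.star_mul_self_of_mem hu]; noncomm_ring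
  calc u * p = u * p * star u * u := by
        rw [mul_assoc _ (star u), Unitary.star_mul_self_of_mem hu, mul_one]
    _ = p * u := by rw [hconj]

theorem eq_of_semiconjBy_of_nonneg {p m k : A} (hp : 0 ≤ p) (hpu : IsUnit p)
    (hm : m ∈ unitary A) (hk : k ∈ unitary A) (h : SemiconjBy p m k) : m = k := by
  have hsq : k * (p * p) * star k = p * p := by
    have hstar : star m * p = p * star k := by
      simpa [star_mul, IsSelfAdjoint.of_nonneg hp |>.star_eq] using congrArg star h.eq
    calc k * (p * p) * star k = p * m * (star m * p) := by rw [hstar, h.eq]; noncomm_ring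
      _ = p * p := by rw [mul_assoc p m, ← mul_assoc m, Unitary.mul_star_self_of_mem hm, one_mul]
  exact hpu.mul_left_cancel (h.eq.trans (commute_of_conj_mul_self_eq hk hp hsq).eq)

theorem SemiconjBy.of_mul_nonneg {u p m k : A} (hu : u ∈ unitary A) (hp : 0 ≤ p)
    (hpu : IsUnit p) (hm : m ∈ unitary A) (hk : k ∈ unitary A) (h : SemiconjBy (u * p) m k) :
    SemiconjBy u m k := by
  have hk' : star u * k * u ∈ unitary A := mul_mem (mul_mem (Unitary.star_mem hu) hk) hu
  have hp' : SemiconjBy p m (star u * k * u) := by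
    calc p * m = star u * (u * p * m) := by
          rw [mul_assoc u, ← mul_assoc, Unitary.star_mul_self_of_mem hu, one_mul]
      _ = star u * k * u * p := by rw [h.eq]; noncomm_ring
  have hmk := eq_of_semiconjBy_of_nonneg hp hpu hm hk' hp'
  rw [SemiconjBy, hmk, ← mul_assoc, ← mul_assoc, Unitary.mul_star_self_of_mem hu, one_mul]

theorem exists_mem_unitary_mul_nonneg {g : A} (hg : IsUnit g) :
    ∃ u p : A, u ∈ unitary A ∧ 0 ≤ p ∧ IsUnit p ∧ g = u * p := by
  have hpp : CFC.sqrt (star g * g) * CFC.sqrt (star g * g) = star g * g :=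
    CFC.sqrt_mul_sqrt_self _ (star_mul_self_nonneg g)
  obtain ⟨q, hq⟩ : IsUnit (CFC.sqrt (star g * g)) :=
    isUnit_mul_self_iff.mp (by rw [hpp]; exact hg.star.mul hg)
  have hqs : star q = q := by
    ext; rw [Units.coe_star, hq]; exact (IsSelfAdjoint.of_nonneg (CFC.sqrt_nonneg _)).star_eq
  refine ⟨g * ↑q⁻¹, q, ?_, hq ▸ CFC.sqrt_nonneg _, q.isUnit, by simp⟩
  refine (hg.mul q⁻¹.isUnit).mem_unitary_of_star_mul_self ?_
  calc star (g * ↑q⁻¹) * (g * ↑q⁻¹) = ↑(star q)⁻¹ * (q * q) * ↑q⁻¹ := by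
        rw [hq, hpp, star_mul, ← Units.coe_star_inv]; noncomm_ring
    _ = 1 := by simp [hqs]

end PolarDecomposition

open Matrix
open scoped MatrixOrder

theorem Matrix.det_eq_one_of_mem_orthogonalGroup_of_det_mul {n : Type*} [Fintype n]
    [DecidableEq n] {u p : Matrix n n ℝ} (hu : u ∈ orthogonalGroup n ℝ) (hp : 0 ≤ p)
    (h : (u * p).det = 1) : u.det = 1 := by
  have hu2 : u.det * u.det = 1 := Unitary.star_mul_self_of_mem (det_of_mem_unitary hu)
  have hp0 : 0 ≤ p.det := hp.posSemidef.det_nonneg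
  rw [det_mul] at h
  nlinarith

theorem stmt6_general (n : ℕ)
    (k₀ g : Matrix.SpecialLinearGroup (Fin n) ℝ)
    (hk₀ : (k₀ : Matrix (Fin n) (Fin n) ℝ) ∈ Matrix.orthogonalGroup (Fin n) ℝ)
    (hg : ((g⁻¹ * k₀ * g : Matrix.SpecialLinearGroup (Fin n) ℝ) :
        Matrix (Fin n) (Fin n) ℝ) ∈ Matrix.orthogonalGroup (Fin n) ℝ) :
    ∃ k' : Matrix.SpecialLinearGroup (Fin n) ℝ,
      (k' : Matrix (Fin n) (Fin n) ℝ) ∈ Matrix.orthogonalGroup (Fin n) ℝ ∧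
      g⁻¹ * k₀ * g = k'⁻¹ * k₀ * k' := by
  obtain ⟨u, p, hu, hp, hpu, hgup⟩ := exists_mem_unitary_mul_nonneg
    ((isUnit_iff_isUnit_det (g : Matrix (Fin n) (Fin n) ℝ)).mpr (by simp))
  have hsemi : SemiconjBy (g : Matrix (Fin n) (Fin n) ℝ) ↑(g⁻¹ * k₀ * g) k₀ :=
    congrArg Subtype.val (by group : g * (g⁻¹ * k₀ * g) = k₀ * g)
  rw [hgup] at hsemi
  have hdet : u.det = 1 := det_eq_one_of_mem_orthogonalGroup_of_det_mul hu hp (hgup ▸ g.2)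
  let k' : SpecialLinearGroup (Fin n) ℝ := ⟨u, hdet⟩
  refine ⟨k', hu, ?_⟩
  rw [mul_assoc k'⁻¹, eq_inv_mul_iff_mul_eq]
  exact Subtype.ext (hsemi.of_mul_nonneg hu hp hpu hg hk₀).eq

/-- In G = SL_n(ℝ) with K = SO(n): if k₀ ∈ K and g ∈ G satisfy
g⁻¹ k₀ g ∈ K, then g⁻¹ k₀ g is K-conjugate to k₀. -/
theorem stmt6 (n : ℕ) (hn : 2 ≤ n)
    (k₀ g : Matrix.SpecialLinearGroup (Fin n) ℝ)
    (hk₀ : (k₀ : Matrix (Fin n) (Fin n) ℝ) ∈ Matrix.orthogonalGroup (Fin n) ℝ)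
    (hg : ((g⁻¹ * k₀ * g : Matrix.SpecialLinearGroup (Fin n) ℝ) :
        Matrix (Fin n) (Fin n) ℝ) ∈ Matrix.orthogonalGroup (Fin n) ℝ) :
    ∃ k' : Matrix.SpecialLinearGroup (Fin n) ℝ,
      (k' : Matrix (Fin n) (Fin n) ℝ) ∈ Matrix.orthogonalGroup (Fin n) ℝ ∧
      g⁻¹ * k₀ * g = k'⁻¹ * k₀ * k' :=
  stmt6_general n k₀ g hk₀ hg
end

section
/- Let (λ_i)_{i≥0} be a nondecreasing sequence of nonnegative reals tending to infinity, and d > 0, V > 0. If ∑_i e^{-tλ_i} ~ V·(4π t)^{-d/2} as t → 0⁺, then the counting function N(λ) = #{i : λ_i ≤ λ} satisfies N(λ) ~ V λ^{d/2} / ((4π)^{d/2} Γ(d/2+1)) as λ → ∞. -/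
/-!
Write `e_i = exp (-t λ_i)`, so that `t ^ r * ∑ e_i → A` as `t → 0⁺`. For `g y = y ^ k` the sum
`∑ e_i g(e_i)` is the heat trace at `(k + 1) t`, hence
`t ^ r ∑ e_i g(e_i) → A / Γ(r) * ∫₀^∞ e^{-x} g(e^{-x}) x^{r-1} dx`. By linearity this holds for
polynomials, and then for every `g` continuous on `[0, 1]` by Weierstrass approximation, because
an error `ε` in `g` changes `t ^ r ∑ e_i g(e_i)` by at most `ε t ^ r ∑ e_i = O(ε)`.
Now `N(1/t)` counts the `e_i ≥ e⁻¹`. Squeezing the indicator of `[e⁻¹, 1]` between continuous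
ramps, one vanishing below `a < e⁻¹` and one equal to `1` above `b > e⁻¹`, traps the limit points
of `t ^ r N(1/t)` between `A (-log b) ^ r / Γ(r + 1)` and `A (-log a) ^ r / Γ(r + 1)`, and both
tend to `A / Γ(r + 1)` as `a, b → e⁻¹`.
-/

open MeasureTheory Real Filter Topology Set Polynomial

namespace Karamata

theorem tendsto_of_forall_approx {α : Type*} {l : Filter α} {f : α → ℝ} {c : ℝ} (C : ℝ)
    (h : ∀ ε > 0, ∃ g : α → ℝ, ∃ L, Tendsto g l (𝓝 L) ∧ |L - c| ≤ C * ε ∧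
      ∀ᶠ x in l, |f x - g x| ≤ C * ε) :
    Tendsto f l (𝓝 c) := by
  rw [Metric.tendsto_nhds]
  intro δ hδ
  set ε := δ / (3 * (|C| + 1)) with hε
  have hCε : C * ε < δ / 3 := by
    calc C * ε ≤ |C| * ε := by gcongr; exact le_abs_self C
      _ < (|C| + 1) * ε := by gcongr; linarith
      _ = δ / 3 := by rw [hε]; field_simp
  obtain ⟨g, L, hg, hL, hfg⟩ := h ε (by positivity)
  filter_upwards [hfg, Metric.tendsto_nhds.mp hg (δ / 3) (by positivity)] with x hfx hgx
  rw [Real.dist_eq] at hgx ⊢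
  linarith [abs_sub_le (f x) (g x) c, abs_sub_le (g x) L c]

theorem hasSum_indicator_one_of_finite {ι : Type*} {S : Set ι} (hS : S.Finite) :
    HasSum (S.indicator 1) (Nat.card S : ℝ) := by
  have h : HasSum (S.indicator (1 : ι → ℝ)) (∑ i ∈ hS.toFinset, S.indicator 1 i) :=
    hasSum_sum_of_ne_finset_zero fun i hi => indicator_of_notMem (by simpa using hi) _
  convert h using 1
  rw [Finset.sum_congr rfl fun i hi => indicator_of_mem (hS.mem_toFinset.mp hi) _]
  simp [Nat.card_coe_set_eq, ncard_eq_toFinset_card S hS]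

theorem natCard_le_tsum {ι : Type*} {S : Set ι} {f : ι → ℝ} (hf : Summable f)
    (hSf : ∀ i, S.indicator 1 i ≤ f i) : (Nat.card S : ℝ) ≤ ∑' i, f i := by
  rcases S.finite_or_infinite with hS | hS
  · exact hasSum_le hSf (hasSum_indicator_one_of_finite hS) hf.hasSum
  · rw [Nat.card_coe_set_eq, hS.ncard, Nat.cast_zero]
    exact tsum_nonneg fun i => (indicator_nonneg (fun _ _ => zero_le_one) i).trans (hSf i)

theorem tsum_le_natCard {ι : Type*} {S : Set ι} {f : ι → ℝ} (hS : S.Finite) (hf : Summable f)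
    (hfS : ∀ i, f i ≤ S.indicator 1 i) : ∑' i, f i ≤ Nat.card S :=
  hasSum_le hfS hf.hasSum (hasSum_indicator_one_of_finite hS)

theorem exp_mul_exp_pow (s : ℝ) (k : ℕ) : exp s * exp s ^ k = exp ((k + 1) * s) := by
  rw [← exp_nat_mul, ← exp_add]; ring_nf

theorem exp_neg_mem_Icc {x : ℝ} (hx : 0 ≤ x) : exp (-x) ∈ Icc 0 1 :=
  ⟨(exp_pos _).le, exp_le_one_iff.mpr (neg_nonpos.mpr hx)⟩

theorem exp_neg_mul_mem_Icc {t y : ℝ} (ht : 0 ≤ t) (hy : 0 ≤ y) : exp (-t * y) ∈ Icc 0 1 :=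
  neg_mul t y ▸ exp_neg_mem_Icc (mul_nonneg ht hy)

theorem indicator_Ici_exp_neg_mul {c : ℝ} (hc : 0 < c) (f : ℝ → ℝ) (x : ℝ) :
    (Ici c).indicator 1 (exp (-x)) * f x = (Iic (-log c)).indicator f x := by
  have hiff : c ≤ exp (-x) ↔ x ≤ -log c := (log_le_iff_le_exp hc).symm.trans le_neg.symm
  by_cases hx : x ≤ -log c
  · rw [indicator_of_mem (mem_Ici.mpr (hiff.mpr hx)), indicator_of_mem (mem_Iic.mpr hx),
      Pi.one_apply, one_mul]
  · rw [indicator_of_notMem (show exp (-x) ∉ Ici c from fun h => hx (hiff.mp h)),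
      indicator_of_notMem (show x ∉ Iic (-log c) from hx), zero_mul]

theorem tendsto_neg_log_rpow (r : ℝ) :
    Tendsto (fun a => (-log a) ^ r) (𝓝 (exp (-1))) (𝓝 1) := by
  have h : ContinuousAt (fun a => (-log a) ^ r) (exp (-1)) :=
    (continuousAt_log (exp_pos _).ne').neg.rpow_const (Or.inl (by simp))
  simpa using h.tendsto

variable {lam : ℕ → ℝ} {r A t : ℝ} {g : ℝ → ℝ}

theorem integrableOn_indicator_Iic_rpow (hr : 0 < r) (C : ℝ) :
    IntegrableOn ((Iic C).indicator fun x => x ^ (r - 1)) (Ioi 0) := by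
  rw [IntegrableOn, integrable_indicator_iff measurableSet_Iic, IntegrableOn,
    Measure.restrict_restrict measurableSet_Iic, inter_comm, Ioi_inter_Iic]
  exact (intervalIntegral.intervalIntegrable_rpow' (by linarith)).1

theorem integral_indicator_Iic_rpow (hr : 0 < r) {C : ℝ} (hC : 0 ≤ C) :
    ∫ x in Ioi 0, (Iic C).indicator (fun x => x ^ (r - 1)) x = C ^ r / r := by
  rw [setIntegral_indicator measurableSet_Iic, Ioi_inter_Iic,
    ← intervalIntegral.integral_of_le hC, integral_rpow (Or.inl (by linarith)), sub_add_cancel,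
    zero_rpow hr.ne', sub_zero]

theorem summable_exp_mul_comp (hnonneg : ∀ i, 0 ≤ lam i) (ht : 0 ≤ t)
    (hsumm : Summable fun i => exp (-t * lam i)) (hg : ContinuousOn g (Icc 0 1)) :
    Summable fun i => exp (-t * lam i) * g (exp (-t * lam i)) := by
  obtain ⟨M, hM⟩ := isCompact_Icc.exists_bound_of_continuousOn hg
  refine .of_norm_bounded (hsumm.mul_right M) fun i => ?_
  rw [norm_mul, norm_of_nonneg (exp_pos _).le]
  gcongr
  exact hM _ (exp_neg_mul_mem_Icc ht (hnonneg i))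

theorem integrableOn_exp_mul_comp_mul_rpow (hr : 0 < r) (hg : ContinuousOn g (Icc 0 1)) :
    IntegrableOn (fun x => exp (-x) * g (exp (-x)) * x ^ (r - 1)) (Ioi 0) := by
  obtain ⟨M, hM⟩ := isCompact_Icc.exists_bound_of_continuousOn hg
  have hmaps : MapsTo (fun x : ℝ => exp (-x)) (Ioi 0) (Icc 0 1) := fun x hx =>
    exp_neg_mem_Icc (le_of_lt hx)
  refine ((GammaIntegral_convergent hr).const_mul M).mono' ?_ ?_
  · refine ContinuousOn.aestronglyMeasurable ?_ measurableSet_Ioi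
    refine ((by fun_prop : Continuous fun x : ℝ => exp (-x)).continuousOn.mul
      (hg.comp (by fun_prop) hmaps)).mul ?_
    exact continuousOn_id.rpow_const fun x hx => Or.inl (ne_of_gt hx)
  · filter_upwards [ae_restrict_mem measurableSet_Ioi] with x (hx : 0 < x)
    rw [norm_mul, norm_mul, norm_of_nonneg (exp_pos _).le,
      norm_of_nonneg (rpow_nonneg (le_of_lt hx) _)]
    calc exp (-x) * ‖g (exp (-x))‖ * x ^ (r - 1) ≤ exp (-x) * M * x ^ (r - 1) := by
          gcongr; exact hM _ (hmaps hx)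
      _ = M * (exp (-x) * x ^ (r - 1)) := by ring

theorem tendsto_rpow_mul_tsum_comp_mul
    (hF : Tendsto (fun t => t ^ r * ∑' i, exp (-t * lam i)) (𝓝[>] 0) (𝓝 A))
    {m : ℝ} (hm : 0 < m) :
    Tendsto (fun t => t ^ r * ∑' i, exp (-(m * t) * lam i)) (𝓝[>] 0) (𝓝 (m ^ (-r) * A)) := by
  have hmul : Tendsto (m * ·) (𝓝[>] (0 : ℝ)) (𝓝[>] 0) :=
    tendsto_iff_comap.2 (comap_mulLeft_nhdsGT_zero hm).ge
  refine ((hF.comp hmul).const_mul (m ^ (-r))).congr' ?_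
  filter_upwards [self_mem_nhdsWithin] with t (ht : 0 < t)
  rw [Function.comp_apply, mul_rpow hm.le ht.le, ← mul_assoc, ← mul_assoc, ← rpow_add hm,
    neg_add_cancel, rpow_zero, one_mul]

theorem tendsto_rpow_mul_tsum_exp_mul_pow (hr : 0 < r)
    (hF : Tendsto (fun t => t ^ r * ∑' i, exp (-t * lam i)) (𝓝[>] 0) (𝓝 A)) (k : ℕ) :
    Tendsto (fun t => t ^ r * ∑' i, exp (-t * lam i) * exp (-t * lam i) ^ k) (𝓝[>] 0)
      (𝓝 (A / Gamma r * ∫ x in Ioi 0, exp (-x) * exp (-x) ^ k * x ^ (r - 1))) := by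
  have hk : (0 : ℝ) < k + 1 := by positivity
  have hintegral : ∫ x in Ioi 0, exp (-x) * exp (-x) ^ k * x ^ (r - 1)
      = (k + 1) ^ (-r) * Gamma r := by
    simp_rw [exp_mul_exp_pow, mul_comm _ (_ ^ (r - 1)), mul_neg]
    rw [integral_rpow_mul_exp_neg_mul_Ioi hr hk, one_div, inv_rpow hk.le, rpow_neg hk.le]
  have hΓ : Gamma r ≠ 0 := (Gamma_pos_of_pos hr).ne'
  rw [hintegral, show A / Gamma r * ((k + 1) ^ (-r) * Gamma r) = (k + 1) ^ (-r) * A by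
    field_simp]
  simp_rw [exp_mul_exp_pow]
  convert tendsto_rpow_mul_tsum_comp_mul hF hk using 6; ring

theorem tendsto_rpow_mul_tsum_polynomial (hnonneg : ∀ i, 0 ≤ lam i)
    (hsumm : ∀ t, 0 < t → Summable fun i => exp (-t * lam i)) (hr : 0 < r)
    (hF : Tendsto (fun t => t ^ r * ∑' i, exp (-t * lam i)) (𝓝[>] 0) (𝓝 A)) (p : ℝ[X]) :
    Tendsto (fun t => t ^ r * ∑' i, exp (-t * lam i) * p.eval (exp (-t * lam i))) (𝓝[>] 0)
      (𝓝 (A / Gamma r * ∫ x in Ioi 0, exp (-x) * p.eval (exp (-x)) * x ^ (r - 1))) := by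
  induction p using Polynomial.induction_on' with
  | add p q hp hq =>
    have hint (p : ℝ[X]) := integrableOn_exp_mul_comp_mul_rpow hr p.continuous.continuousOn
    simp only [eval_add, mul_add, add_mul]
    rw [integral_add (hint p) (hint q), mul_add]
    refine (hp.add hq).congr' ?_
    filter_upwards [self_mem_nhdsWithin] with t (ht : 0 < t)
    have hs (p : ℝ[X]) :=
      summable_exp_mul_comp hnonneg ht.le (hsumm t ht) p.continuous.continuousOn
    rw [(hs p).tsum_add (hs q), mul_add]
  | monomial k a =>
    convert (tendsto_rpow_mul_tsum_exp_mul_pow hr hF k).const_mul a using 2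
    · simp only [eval_monomial, mul_left_comm _ a, tsum_mul_left]
    · simp only [eval_monomial, mul_left_comm _ a, mul_assoc, integral_const_mul]

theorem abs_tsum_exp_mul_comp_sub_le (hnonneg : ∀ i, 0 ≤ lam i) (ht : 0 ≤ t)
    (hsumm : Summable fun i => exp (-t * lam i)) {g₁ g₂ : ℝ → ℝ}
    (hg₁ : ContinuousOn g₁ (Icc 0 1)) (hg₂ : ContinuousOn g₂ (Icc 0 1)) {ε : ℝ}
    (hε : ∀ y ∈ Icc 0 1, |g₁ y - g₂ y| ≤ ε) :
    |∑' i, exp (-t * lam i) * g₁ (exp (-t * lam i))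
      - ∑' i, exp (-t * lam i) * g₂ (exp (-t * lam i))|
      ≤ ε * ∑' i, exp (-t * lam i) := by
  rw [← (summable_exp_mul_comp hnonneg ht hsumm hg₁).tsum_sub
    (summable_exp_mul_comp hnonneg ht hsumm hg₂), ← tsum_mul_left, ← Real.norm_eq_abs]
  refine tsum_of_norm_bounded (hsumm.mul_left ε).hasSum fun i => ?_
  rw [← mul_sub, Real.norm_eq_abs, abs_mul, abs_of_pos (exp_pos _), mul_comm ε]
  gcongr
  exact hε _ (exp_neg_mul_mem_Icc ht (hnonneg i))

theorem abs_integral_exp_mul_comp_mul_rpow_sub_le (hr : 0 < r) {g₁ g₂ : ℝ → ℝ}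
    (hg₁ : ContinuousOn g₁ (Icc 0 1)) (hg₂ : ContinuousOn g₂ (Icc 0 1)) {ε : ℝ}
    (hε : ∀ y ∈ Icc 0 1, |g₁ y - g₂ y| ≤ ε) :
    |(∫ x in Ioi 0, exp (-x) * g₁ (exp (-x)) * x ^ (r - 1))
      - ∫ x in Ioi 0, exp (-x) * g₂ (exp (-x)) * x ^ (r - 1)| ≤ ε * Gamma r := by
  rw [← integral_sub (integrableOn_exp_mul_comp_mul_rpow hr hg₁)
    (integrableOn_exp_mul_comp_mul_rpow hr hg₂), Gamma_eq_integral hr, ← integral_const_mul,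
    ← Real.norm_eq_abs]
  refine norm_integral_le_of_norm_le ((GammaIntegral_convergent hr).const_mul ε) ?_
  filter_upwards [ae_restrict_mem measurableSet_Ioi] with x (hx : 0 < x)
  rw [← sub_mul, ← mul_sub, Real.norm_eq_abs, abs_mul, abs_mul, abs_of_pos (exp_pos _),
    abs_of_nonneg (rpow_nonneg hx.le _)]
  calc exp (-x) * |g₁ (exp (-x)) - g₂ (exp (-x))| * x ^ (r - 1)
      ≤ exp (-x) * ε * x ^ (r - 1) := by gcongr; exact hε _ (exp_neg_mem_Icc hx.le)
    _ = ε * (exp (-x) * x ^ (r - 1)) := by ring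

theorem tendsto_rpow_mul_tsum_of_continuousOn (hnonneg : ∀ i, 0 ≤ lam i)
    (hsumm : ∀ t, 0 < t → Summable fun i => exp (-t * lam i)) (hr : 0 < r)
    (hF : Tendsto (fun t => t ^ r * ∑' i, exp (-t * lam i)) (𝓝[>] 0) (𝓝 A))
    (hg : ContinuousOn g (Icc 0 1)) :
    Tendsto (fun t => t ^ r * ∑' i, exp (-t * lam i) * g (exp (-t * lam i))) (𝓝[>] 0)
      (𝓝 (A / Gamma r * ∫ x in Ioi 0, exp (-x) * g (exp (-x)) * x ^ (r - 1))) := by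
  have hΓ : 0 < Gamma r := Gamma_pos_of_pos hr
  refine tendsto_of_forall_approx (|A| + 1) fun ε hε => ?_
  obtain ⟨P, hP⟩ := exists_polynomial_near_of_continuousOn 0 1 g hg ε hε
  have hgP : ∀ y ∈ Icc (0 : ℝ) 1, |g y - P.eval y| ≤ ε := fun y hy => by
    rw [abs_sub_comm]; exact (hP y hy).le
  refine ⟨_, _, tendsto_rpow_mul_tsum_polynomial hnonneg hsumm hr hF P, ?_, ?_⟩
  · rw [← mul_sub, abs_mul, abs_div, abs_of_pos hΓ, abs_sub_comm]
    calc |A| / Gamma r * |_ - _| ≤ |A| / Gamma r * (ε * Gamma r) := by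
          gcongr
          exact abs_integral_exp_mul_comp_mul_rpow_sub_le hr hg P.continuous.continuousOn hgP
      _ = |A| * ε := by field_simp
      _ ≤ (|A| + 1) * ε := by gcongr; linarith
  · filter_upwards [self_mem_nhdsWithin,
      hF.eventually_lt_const ((le_abs_self A).trans_lt (lt_add_one _))] with t (ht : 0 < t) hFt
    rw [← mul_sub, abs_mul, abs_of_nonneg (rpow_nonneg ht.le _)]
    calc t ^ r * |_ - _| ≤ t ^ r * (ε * ∑' i, exp (-t * lam i)) := by
          gcongr
          exact abs_tsum_exp_mul_comp_sub_le hnonneg ht.le (hsumm t ht) hg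
            P.continuous.continuousOn hgP
      _ = ε * (t ^ r * ∑' i, exp (-t * lam i)) := by ring
      _ ≤ ε * (|A| + 1) := by gcongr
      _ = (|A| + 1) * ε := mul_comm _ _

noncomputable def ramp (a b y : ℝ) : ℝ := max 0 (min 1 ((y - a) / (b - a)))

section Ramp

variable {a b : ℝ}

theorem continuous_ramp : Continuous (ramp a b) := by
  unfold ramp; fun_prop

theorem ramp_nonneg (y : ℝ) : 0 ≤ ramp a b y := le_max_left _ _

theorem ramp_eq_zero_of_le (hab : a < b) {y : ℝ} (hy : y ≤ a) : ramp a b y = 0 :=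
  max_eq_left ((min_le_right _ _).trans
    (div_nonpos_of_nonpos_of_nonneg (by linarith) (by linarith)))

theorem ramp_le_indicator_Ici (hab : a < b) (y : ℝ) : ramp a b y ≤ (Ici a).indicator 1 y := by
  rcases le_or_gt a y with hy | hy
  · rw [indicator_of_mem (mem_Ici.mpr hy), Pi.one_apply]
    exact max_le zero_le_one (min_le_left _ _)
  · rw [indicator_of_notMem (notMem_Ici.mpr hy), ramp_eq_zero_of_le hab hy.le]

theorem indicator_Ici_le_ramp (hab : a < b) (y : ℝ) : (Ici b).indicator 1 y ≤ ramp a b y := by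
  rcases le_or_gt b y with hy | hy
  · rw [indicator_of_mem (mem_Ici.mpr hy), Pi.one_apply]
    refine le_max_of_le_right (le_min le_rfl ?_)
    rw [le_div_iff₀ (by linarith)]
    linarith
  · rw [indicator_of_notMem (notMem_Ici.mpr hy)]
    exact ramp_nonneg y

-- Since the ramp vanishes below `a > 0`, this makes it `y * g y` with `g` continuous.
theorem mul_ramp_div_max (ha : 0 < a) (hab : a < b) (y : ℝ) :
    y * (ramp a b y / max y a) = ramp a b y := by
  rcases le_or_gt a y with hay | hay
  · rw [max_eq_left hay, mul_div_cancel₀ _ (by linarith)]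
  · rw [ramp_eq_zero_of_le hab hay.le, zero_div, mul_zero]

theorem continuous_ramp_div_max (ha : 0 < a) : Continuous fun y => ramp a b y / max y a :=
  continuous_ramp.div (by fun_prop) fun y => (ha.trans_le (le_max_right y a)).ne'

theorem integrableOn_ramp_exp_neg_mul_rpow (hr : 0 < r) (ha : 0 < a) (hab : a < b) :
    IntegrableOn (fun x => ramp a b (exp (-x)) * x ^ (r - 1)) (Ioi 0) := by
  simpa only [mul_ramp_div_max ha hab] using
    integrableOn_exp_mul_comp_mul_rpow hr (continuous_ramp_div_max (b := b) ha).continuousOn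

theorem tendsto_rpow_mul_tsum_ramp (hnonneg : ∀ i, 0 ≤ lam i)
    (hsumm : ∀ t, 0 < t → Summable fun i => exp (-t * lam i)) (hr : 0 < r)
    (hF : Tendsto (fun t => t ^ r * ∑' i, exp (-t * lam i)) (𝓝[>] 0) (𝓝 A))
    (ha : 0 < a) (hab : a < b) :
    Tendsto (fun t => t ^ r * ∑' i, ramp a b (exp (-t * lam i))) (𝓝[>] 0)
      (𝓝 (A / Gamma r * ∫ x in Ioi 0, ramp a b (exp (-x)) * x ^ (r - 1))) := by
  simpa only [mul_ramp_div_max ha hab] using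
    tendsto_rpow_mul_tsum_of_continuousOn hnonneg hsumm hr hF
      (continuous_ramp_div_max (b := b) ha).continuousOn

theorem summable_ramp_exp_neg_mul (hnonneg : ∀ i, 0 ≤ lam i) (ht : 0 ≤ t)
    (hsumm : Summable fun i => exp (-t * lam i)) (ha : 0 < a) (hab : a < b) :
    Summable fun i => ramp a b (exp (-t * lam i)) := by
  simpa only [mul_ramp_div_max ha hab] using
    summable_exp_mul_comp hnonneg ht hsumm (continuous_ramp_div_max (b := b) ha).continuousOn

theorem setIntegral_ramp_exp_neg_mul_rpow_le (hr : 0 < r) (ha : 0 < a) (ha1 : a ≤ 1)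
    (hab : a < b) : ∫ x in Ioi 0, ramp a b (exp (-x)) * x ^ (r - 1) ≤ (-log a) ^ r / r := by
  rw [← integral_indicator_Iic_rpow hr (neg_nonneg.mpr (log_nonpos ha.le ha1))]
  refine setIntegral_mono_on (integrableOn_ramp_exp_neg_mul_rpow hr ha hab)
    (integrableOn_indicator_Iic_rpow hr _) measurableSet_Ioi fun x (hx : 0 < x) => ?_
  rw [← indicator_Ici_exp_neg_mul ha]
  gcongr
  exact ramp_le_indicator_Ici hab _

theorem le_setIntegral_ramp_exp_neg_mul_rpow (hr : 0 < r) (ha : 0 < a) (hb1 : b ≤ 1)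
    (hab : a < b) : (-log b) ^ r / r ≤ ∫ x in Ioi 0, ramp a b (exp (-x)) * x ^ (r - 1) := by
  rw [← integral_indicator_Iic_rpow hr (neg_nonneg.mpr (log_nonpos (ha.trans hab).le hb1))]
  refine setIntegral_mono_on (integrableOn_indicator_Iic_rpow hr _)
    (integrableOn_ramp_exp_neg_mul_rpow hr ha hab) measurableSet_Ioi fun x (hx : 0 < x) => ?_
  rw [← indicator_Ici_exp_neg_mul (ha.trans hab)]
  gcongr
  exact indicator_Ici_le_ramp hab _

end Ramp

theorem finite_setOf_le (ht : 0 < t) (hsumm : Summable fun i => exp (-t * lam i)) (L : ℝ) :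
    {i | lam i ≤ L}.Finite := by
  refine (eventually_cofinite.mp (hsumm.tendsto_cofinite_zero.eventually
    (gt_mem_nhds (exp_pos (-t * L))))).subset fun i (hi : lam i ≤ L) => ?_
  simp only [mem_ofPred_eq, not_lt, exp_le_exp]
  nlinarith

theorem indicator_setOf_le_inv (ht : 0 < t) (i : ℕ) :
    {i | lam i ≤ t⁻¹}.indicator 1 i
      = (Ici (exp (-1))).indicator (1 : ℝ → ℝ) (exp (-t * lam i)) := by
  have hiff : lam i ≤ t⁻¹ ↔ exp (-1) ≤ exp (-t * lam i) := by
    rw [exp_le_exp, neg_mul, neg_le_neg_iff, ← one_div, le_div_iff₀' ht]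
  simp only [indicator_apply, mem_ofPred_eq, mem_Ici, hiff, Pi.one_apply]

theorem nonneg_of_tendsto_rpow_mul_tsum
    (hF : Tendsto (fun t => t ^ r * ∑' i, exp (-t * lam i)) (𝓝[>] 0) (𝓝 A)) : 0 ≤ A :=
  ge_of_tendsto hF (eventually_nhdsWithin_of_forall fun t (ht : 0 < t) =>
    mul_nonneg (rpow_nonneg ht.le _) (tsum_nonneg fun _ => (exp_pos _).le))

theorem eventually_rpow_mul_natCard_lt (hnonneg : ∀ i, 0 ≤ lam i)
    (hsumm : ∀ t, 0 < t → Summable fun i => exp (-t * lam i)) (hr : 0 < r)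
    (hF : Tendsto (fun t => t ^ r * ∑' i, exp (-t * lam i)) (𝓝[>] 0) (𝓝 A))
    {c : ℝ} (hc : A / Gamma (r + 1) < c) :
    ∀ᶠ t in 𝓝[>] 0, t ^ r * (Nat.card {i | lam i ≤ t⁻¹} : ℝ) < c := by
  have hcont := ((tendsto_neg_log_rpow r).const_mul (A / Gamma (r + 1))).mono_left
    (nhdsWithin_le_nhds (s := Iio (exp (-1))))
  rw [mul_one] at hcont
  obtain ⟨a, hac, ha, hae⟩ :=
    ((hcont.eventually_lt_const hc).and (Ioo_mem_nhdsLT (exp_pos (-1)))).exists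
  have hlim : A / Gamma r * ∫ x in Ioi 0, ramp a (exp (-1)) (exp (-x)) * x ^ (r - 1)
      ≤ A / Gamma (r + 1) * (-log a) ^ r := by
    have hA := nonneg_of_tendsto_rpow_mul_tsum hF
    have hΓ := Gamma_pos_of_pos hr
    calc _ ≤ A / Gamma r * ((-log a) ^ r / r) := by
          gcongr
          exact setIntegral_ramp_exp_neg_mul_rpow_le hr ha
            (hae.le.trans (exp_lt_one_iff.mpr neg_one_lt_zero).le) hae
      _ = A / Gamma (r + 1) * (-log a) ^ r := by rw [Gamma_add_one hr.ne']; field_simp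
  filter_upwards [self_mem_nhdsWithin, (tendsto_rpow_mul_tsum_ramp hnonneg hsumm hr hF ha
    hae).eventually_lt_const (hlim.trans_lt hac)] with t (ht : 0 < t) hlt
  refine lt_of_le_of_lt ?_ hlt
  gcongr
  exact natCard_le_tsum (summable_ramp_exp_neg_mul hnonneg ht.le (hsumm t ht) ha hae)
    fun i => (indicator_setOf_le_inv ht i).trans_le (indicator_Ici_le_ramp hae _)

theorem eventually_lt_rpow_mul_natCard (hnonneg : ∀ i, 0 ≤ lam i)
    (hsumm : ∀ t, 0 < t → Summable fun i => exp (-t * lam i)) (hr : 0 < r)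
    (hF : Tendsto (fun t => t ^ r * ∑' i, exp (-t * lam i)) (𝓝[>] 0) (𝓝 A))
    {c : ℝ} (hc : c < A / Gamma (r + 1)) :
    ∀ᶠ t in 𝓝[>] 0, c < t ^ r * (Nat.card {i | lam i ≤ t⁻¹} : ℝ) := by
  have hcont := ((tendsto_neg_log_rpow r).const_mul (A / Gamma (r + 1))).mono_left
    (nhdsWithin_le_nhds (s := Ioi (exp (-1))))
  rw [mul_one] at hcont
  obtain ⟨b, hbc, hbe, hb1⟩ := ((hcont.eventually_const_lt hc).and
    (Ioo_mem_nhdsGT (exp_lt_one_iff.mpr neg_one_lt_zero))).exists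
  have hlim : A / Gamma (r + 1) * (-log b) ^ r
      ≤ A / Gamma r * ∫ x in Ioi 0, ramp (exp (-1)) b (exp (-x)) * x ^ (r - 1) := by
    have hA := nonneg_of_tendsto_rpow_mul_tsum hF
    have hΓ := Gamma_pos_of_pos hr
    calc _ = A / Gamma r * ((-log b) ^ r / r) := by rw [Gamma_add_one hr.ne']; field_simp
      _ ≤ _ := by
          gcongr
          exact le_setIntegral_ramp_exp_neg_mul_rpow hr (exp_pos _) hb1.le hbe
  filter_upwards [self_mem_nhdsWithin, (tendsto_rpow_mul_tsum_ramp hnonneg hsumm hr hF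
    (exp_pos _) hbe).eventually_const_lt (hbc.trans_le hlim)] with t (ht : 0 < t) hlt
  refine hlt.trans_le ?_
  gcongr
  exact tsum_le_natCard (finite_setOf_le ht (hsumm t ht) _)
    (summable_ramp_exp_neg_mul hnonneg ht.le (hsumm t ht) (exp_pos _) hbe)
    fun i => (ramp_le_indicator_Ici hbe _).trans_eq (indicator_setOf_le_inv ht i).symm

theorem tendsto_rpow_mul_natCard (hnonneg : ∀ i, 0 ≤ lam i)
    (hsumm : ∀ t, 0 < t → Summable fun i => exp (-t * lam i)) (hr : 0 < r)
    (hF : Tendsto (fun t => t ^ r * ∑' i, exp (-t * lam i)) (𝓝[>] 0) (𝓝 A)) :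
    Tendsto (fun t => t ^ r * (Nat.card {i | lam i ≤ t⁻¹} : ℝ)) (𝓝[>] 0)
      (𝓝 (A / Gamma (r + 1))) :=
  tendsto_order.2 ⟨fun _ hc => eventually_lt_rpow_mul_natCard hnonneg hsumm hr hF hc,
    fun _ hc => eventually_rpow_mul_natCard_lt hnonneg hsumm hr hF hc⟩

end Karamata

theorem stmt13_general (lam : ℕ → ℝ) (hnonneg : ∀ i, 0 ≤ lam i)
    (d V : ℝ) (hd : 0 < d) (hV : 0 < V)
    (hsumm : ∀ t : ℝ, 0 < t → Summable fun i => Real.exp (-t * lam i))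
    (hheat : Tendsto
      (fun t : ℝ => (∑' i : ℕ, Real.exp (-t * lam i)) /
        (V * (4 * Real.pi * t) ^ (-(d / 2))))
      (nhdsWithin 0 (Set.Ioi 0)) (nhds 1)) :
    Tendsto
      (fun L : ℝ => ((Nat.card {i : ℕ | lam i ≤ L}) : ℝ) /
        (V * L ^ (d / 2) / ((4 * Real.pi) ^ (d / 2) * Real.Gamma (d / 2 + 1))))
      atTop (nhds 1) := by
  set r := d / 2
  have hr : 0 < r := by positivity
  have h4π : 0 < 4 * π := by positivity
  have hF : Tendsto (fun t => t ^ r * ∑' i, exp (-t * lam i)) (𝓝[>] 0)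
      (𝓝 (V * (4 * π) ^ (-r))) := by
    refine (one_mul (V * (4 * π) ^ (-r)) ▸ hheat.mul_const (V * (4 * π) ^ (-r))).congr' ?_
    filter_upwards [self_mem_nhdsWithin] with t (ht : 0 < t)
    rw [mul_rpow h4π.le ht.le, rpow_neg ht.le]
    field_simp
  have hN := (Karamata.tendsto_rpow_mul_natCard hnonneg hsumm hr hF).comp
    tendsto_inv_atTop_nhdsGT_zero
  have hconst : V * (4 * π) ^ (-r) / Gamma (r + 1) * ((4 * π) ^ r * Gamma (r + 1) / V) = 1 := by
    rw [rpow_neg h4π.le]; field_simp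
  refine (hconst ▸ hN.mul_const ((4 * π) ^ r * Gamma (r + 1) / V)).congr' ?_
  filter_upwards [eventually_gt_atTop 0] with L hL
  rw [Function.comp_apply, inv_inv, inv_rpow hL.le]
  field_simp

/-- Karamata: If (λ_i) is nondecreasing, nonnegative, tending to
infinity, and ∑_i e^{-tλ_i} ~ V(4πt)^{-d/2} as t → 0⁺, then the counting function
N(Λ) = #{i : λ_i ≤ Λ} satisfies N(Λ) ~ V Λ^{d/2}/((4π)^{d/2} Γ(d/2+1)). -/
theorem stmt13 (lam : ℕ → ℝ) (hmono : Monotone lam) (hnonneg : ∀ i, 0 ≤ lam i)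
    (htop : Tendsto lam atTop atTop) (d V : ℝ) (hd : 0 < d) (hV : 0 < V)
    (hsumm : ∀ t : ℝ, 0 < t → Summable fun i => Real.exp (-t * lam i))
    (hheat : Tendsto
      (fun t : ℝ => (∑' i : ℕ, Real.exp (-t * lam i)) /
        (V * (4 * Real.pi * t) ^ (-(d / 2))))
      (nhdsWithin 0 (Set.Ioi 0)) (nhds 1)) :
    Tendsto
      (fun L : ℝ => ((Nat.card {i : ℕ | lam i ≤ L}) : ℝ) /
        (V * L ^ (d / 2) / ((4 * Real.pi) ^ (d / 2) * Real.Gamma (d / 2 + 1))))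
      atTop (nhds 1) :=
  stmt13_general lam hnonneg d V hd hV hsumm hheat
end
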